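/- arXiv:2004.11941 — 7 statements merged into one kernel-verified Lean document; each statement's English description precedes it below -/
import Mathlib

section
/- Let A : ℝ^r → Matrix (Fin n) (Fin n) ℝ be a smooth map with A x symmetric for every x, let V : ℝ^r → ℝ^r be a smooth vector field belonging to L𝒟_A witnessed by a smooth map U : ℝ^r → Matrix (Fin n) (Fin n) ℝ, and let X : ℝ^r → Matrix (Fin n) (Fin n) ℝ be a smooth map such that X x is invertible for every x. Define B : ℝ^r → Matrix (Fin n) (Fin n) ℝ by B x = (X x)ᵀ * A x * (X x), and define C : ℝ^r → Matrix (Fin n) (Fin n) ℝ by C x = (X x)⁻¹ * (fderiv ℝ X x)(V x) + (X x)⁻¹ * (U x) * (X x). Then for every x, (fderiv ℝ B x)(V x) = (C x)ᵀ * B x + B x * (C x); in particular V belongs to L𝒟_B. -/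
/-!
By the Leibniz rule, `dB(V) = dXᵀ A X + Xᵀ (Uᵀ A + A U) X + Xᵀ A dX` with `dX = dX(V)`.
Since `X X⁻¹ = 1`, the witness `C = X⁻¹ dX + X⁻¹ U X` gives `Cᵀ B = dXᵀ A X + Xᵀ Uᵀ A X` and
`B C = Xᵀ A dX + Xᵀ A U X`, which add up to `dB(V)`.
-/

attribute [local instance] Matrix.normedAddCommGroup Matrix.normedSpace

open scoped Matrix

namespace Matrix

section Calculus

variable {𝕜 : Type*} [NontriviallyNormedField 𝕜] [CompleteSpace 𝕜]
  {E : Type*} [NormedAddCommGroup E] [NormedSpace 𝕜 E]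
  {l m p : Type*} [Fintype l] [Fintype m] [Fintype p]

noncomputable def mulCLM : Matrix l m 𝕜 →L[𝕜] Matrix m p 𝕜 →L[𝕜] Matrix l p 𝕜 :=
  LinearMap.toContinuousLinearMap <|
    (LinearMap.toContinuousLinearMap : _ ≃ₗ[𝕜] _).toLinearMap ∘ₗ mulLinearMap 𝕜

noncomputable def transposeCLM : Matrix l m 𝕜 →L[𝕜] Matrix m l 𝕜 :=
  LinearMap.toContinuousLinearMap (transposeLinearEquiv l m 𝕜 𝕜).toLinearMap

variable {f : E → Matrix l m 𝕜} {g : E → Matrix m p 𝕜} {x : E}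

theorem _root_.DifferentiableAt.matrix_mul (hf : DifferentiableAt 𝕜 f x)
    (hg : DifferentiableAt 𝕜 g x) : DifferentiableAt 𝕜 (fun y => f y * g y) x :=
  (mulCLM.hasFDerivAt_of_bilinear hf.hasFDerivAt hg.hasFDerivAt).differentiableAt

theorem fderiv_mul_apply (hf : DifferentiableAt 𝕜 f x) (hg : DifferentiableAt 𝕜 g x) (v : E) :
    fderiv 𝕜 (fun y => f y * g y) x v = fderiv 𝕜 f x v * g x + f x * fderiv 𝕜 g x v := by
  rw [add_comm]
  exact DFunLike.congr_fun (mulCLM.fderiv_of_bilinear hf hg) v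

theorem _root_.HasFDerivAt.matrix_transpose {f' : E →L[𝕜] Matrix l m 𝕜}
    (hf : HasFDerivAt f f' x) : HasFDerivAt (fun y => (f y)ᵀ) (transposeCLM.comp f') x :=
  (transposeCLM (𝕜 := 𝕜) (l := l) (m := m)).hasFDerivAt.comp x hf

theorem _root_.DifferentiableAt.matrix_transpose (hf : DifferentiableAt 𝕜 f x) :
    DifferentiableAt 𝕜 (fun y => (f y)ᵀ) x :=
  hf.hasFDerivAt.matrix_transpose.differentiableAt

theorem fderiv_transpose_apply (hf : DifferentiableAt 𝕜 f x) (v : E) :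
    fderiv 𝕜 (fun y => (f y)ᵀ) x v = (fderiv 𝕜 f x v)ᵀ :=
  DFunLike.congr_fun hf.hasFDerivAt.matrix_transpose.fderiv v

theorem fderiv_transpose_mul_mul_apply {A X : E → Matrix m m 𝕜}
    (hA : DifferentiableAt 𝕜 A x) (hX : DifferentiableAt 𝕜 X x) (v : E) :
    fderiv 𝕜 (fun y => (X y)ᵀ * A y * X y) x v =
      (fderiv 𝕜 X x v)ᵀ * A x * X x + (X x)ᵀ * fderiv 𝕜 A x v * X x +
        (X x)ᵀ * A x * fderiv 𝕜 X x v := by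
  rw [fderiv_mul_apply (hX.matrix_transpose.matrix_mul hA) hX,
    fderiv_mul_apply hX.matrix_transpose hA, fderiv_transpose_apply hX, Matrix.add_mul]

end Calculus

theorem transpose_mul_mul_leibniz_eq {R : Type*} [CommRing R] {m : Type*} [Fintype m]
    [DecidableEq m] {A X U D : Matrix m m R} (hX : IsUnit X) :
    Dᵀ * A * X + Xᵀ * (Uᵀ * A + A * U) * X + Xᵀ * A * D =
      (X⁻¹ * D + X⁻¹ * U * X)ᵀ * (Xᵀ * A * X) + Xᵀ * A * X * (X⁻¹ * D + X⁻¹ * U * X) := by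
  have hdet := (isUnit_iff_isUnit_det X).mp hX
  have hinvT : (X⁻¹)ᵀ * Xᵀ = 1 := by
    rw [← transpose_mul, mul_nonsing_inv _ hdet, transpose_one]
  simp only [transpose_add, transpose_mul, Matrix.add_mul, Matrix.mul_add, Matrix.mul_assoc,
    mul_nonsing_inv_cancel_left _ _ hdet]
  simp only [← Matrix.mul_assoc, hinvT, Matrix.one_mul]
  abel

end Matrix

theorem lieAlgebra_isotropy_congr_general {r n : ℕ}
    (A : (Fin r → ℝ) → Matrix (Fin n) (Fin n) ℝ)
    (hA : ContDiff ℝ (⊤ : ℕ∞) A)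
    (V : (Fin r → ℝ) → (Fin r → ℝ))
    (U : (Fin r → ℝ) → Matrix (Fin n) (Fin n) ℝ)
    (hVU : ∀ x, fderiv ℝ A x (V x) = (U x)ᵀ * A x + A x * U x)
    (X : (Fin r → ℝ) → Matrix (Fin n) (Fin n) ℝ) (hX : ContDiff ℝ (⊤ : ℕ∞) X)
    (hXinv : ∀ x, IsUnit (X x))
    (B C : (Fin r → ℝ) → Matrix (Fin n) (Fin n) ℝ)
    (hB : ∀ x, B x = (X x)ᵀ * A x * X x)
    (hC : ∀ x, C x = (X x)⁻¹ * fderiv ℝ X x (V x) + (X x)⁻¹ * U x * X x) :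
    ∀ x, fderiv ℝ B x (V x) = (C x)ᵀ * B x + B x * C x := by
  intro x
  have hB' : B = fun y => (X y)ᵀ * A y * X y := funext hB
  rw [hB', Matrix.fderiv_transpose_mul_mul_apply (hA.differentiable (by simp) x)
    (hX.differentiable (by simp) x), hVU x, hC x]
  exact Matrix.transpose_mul_mul_leibniz_eq (hXinv x)

/-- If a smooth vector field `V` belongs to `L𝒟_A` (witnessed by a smooth `U`) and `X` is a
smooth invertible-matrix-valued map, then `V` belongs to `L𝒟_B` where `B = Xᵀ A X`,
witnessed by `C = X⁻¹ dX(V) + X⁻¹ U X`. -/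
theorem lieAlgebra_isotropy_congr {r n : ℕ}
    (A : (Fin r → ℝ) → Matrix (Fin n) (Fin n) ℝ)
    (hA : ContDiff ℝ (⊤ : ℕ∞) A) (hAsymm : ∀ x, (A x).IsSymm)
    (V : (Fin r → ℝ) → (Fin r → ℝ)) (hV : ContDiff ℝ (⊤ : ℕ∞) V)
    (U : (Fin r → ℝ) → Matrix (Fin n) (Fin n) ℝ) (hU : ContDiff ℝ (⊤ : ℕ∞) U)
    (hVU : ∀ x, fderiv ℝ A x (V x) = (U x)ᵀ * A x + A x * U x)
    (X : (Fin r → ℝ) → Matrix (Fin n) (Fin n) ℝ) (hX : ContDiff ℝ (⊤ : ℕ∞) X)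
    (hXinv : ∀ x, IsUnit (X x))
    (B C : (Fin r → ℝ) → Matrix (Fin n) (Fin n) ℝ)
    (hB : ∀ x, B x = (X x)ᵀ * A x * X x)
    (hC : ∀ x, C x = (X x)⁻¹ * fderiv ℝ X x (V x) + (X x)⁻¹ * U x * X x) :
    ∀ x, fderiv ℝ B x (V x) = (C x)ᵀ * B x + B x * C x :=
  lieAlgebra_isotropy_congr_general A hA V U hVU X hX hXinv B C hB hC
end

section
/- The set {(x₁, x₂) ∈ ℝ² | x₁ > 0 ∧ x₁*x₂ + x₂^2 > 0} is not connected (it is the disjoint union of the two open sets {x₁ > 0 ∧ x₂ > 0} and {x₁ > 0 ∧ x₁ + x₂ < 0}, both nonempty). -/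
lemma aux_eq : {p : ℝ × ℝ | p.1 > 0 ∧ p.1 * p.2 + p.2 ^ 2 > 0} =
    {p : ℝ × ℝ | p.1 > 0 ∧ p.2 > 0} ∪ {p : ℝ × ℝ | p.1 > 0 ∧ p.1 + p.2 < 0} := by
  ext ⟨x, y⟩
  simp only [Set.mem_setOf_eq, Set.mem_union]
  constructor
  · rintro ⟨hx, h⟩
    rcases lt_trichotomy y 0 with hy | hy | hy
    · right; exact ⟨hx, by nlinarith⟩
    · exfalso; nlinarith
    · left; exact ⟨hx, hy⟩
  · rintro (⟨hx, hy⟩ | ⟨hx, hy⟩) <;> exact ⟨hx, by nlinarith⟩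

lemma aux_disj : Disjoint {p : ℝ × ℝ | p.1 > 0 ∧ p.2 > 0}
    {p : ℝ × ℝ | p.1 > 0 ∧ p.1 + p.2 < 0} := by
  rw [Set.disjoint_left]
  rintro ⟨x, y⟩ ⟨hx, hy⟩ ⟨hx', hy'⟩
  dsimp at *; linarith

lemma aux_open1 : IsOpen {p : ℝ × ℝ | p.1 > 0 ∧ p.2 > 0} :=
  (isOpen_lt continuous_const continuous_fst).inter
    (isOpen_lt continuous_const continuous_snd)

lemma aux_open2 : IsOpen {p : ℝ × ℝ | p.1 > 0 ∧ p.1 + p.2 < 0} :=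
  (isOpen_lt continuous_const continuous_fst).inter
    (isOpen_lt (continuous_fst.add continuous_snd) continuous_const)

/-- The region `S^{(2,0,0)}(A₊)` where `A₊(x₁,x₂) = !![x₁, 0; 0, x₁x₂ + x₂²]` is positive
definite, i.e. `{(x₁,x₂) | x₁ > 0 ∧ x₁x₂ + x₂² > 0}`, is not connected: it is the disjoint
union of the two nonempty open sets `{x₁ > 0 ∧ x₂ > 0}` and `{x₁ > 0 ∧ x₁ + x₂ < 0}`. -/
theorem posDef_region_add_not_connected :
    ¬ IsConnected {p : ℝ × ℝ | p.1 > 0 ∧ p.1 * p.2 + p.2 ^ 2 > 0} ∧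
    {p : ℝ × ℝ | p.1 > 0 ∧ p.1 * p.2 + p.2 ^ 2 > 0} =
      {p : ℝ × ℝ | p.1 > 0 ∧ p.2 > 0} ∪ {p : ℝ × ℝ | p.1 > 0 ∧ p.1 + p.2 < 0} ∧
    Disjoint {p : ℝ × ℝ | p.1 > 0 ∧ p.2 > 0} {p : ℝ × ℝ | p.1 > 0 ∧ p.1 + p.2 < 0} ∧
    IsOpen {p : ℝ × ℝ | p.1 > 0 ∧ p.2 > 0} ∧
    IsOpen {p : ℝ × ℝ | p.1 > 0 ∧ p.1 + p.2 < 0} ∧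
    Set.Nonempty {p : ℝ × ℝ | p.1 > 0 ∧ p.2 > 0} ∧
    Set.Nonempty {p : ℝ × ℝ | p.1 > 0 ∧ p.1 + p.2 < 0} := by
  refine ⟨?_, aux_eq, aux_disj, aux_open1, aux_open2,
    ⟨(1, 1), by norm_num⟩, ⟨(1, -2), by norm_num⟩⟩
  rintro ⟨-, hpc⟩
  have h := hpc _ _ aux_open1 aux_open2 (aux_eq.le)
    ⟨(1, 1), by constructor <;> norm_num, by norm_num⟩
    ⟨(1, -2), by constructor <;> norm_num, by norm_num⟩
  obtain ⟨p, -, hp1, hp2⟩ := h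
  exact Set.disjoint_left.mp aux_disj hp1 hp2
end

section
/- The topological subspaces {(x₁, x₂) ∈ ℝ² | x₁ > 0 ∧ x₁*x₂ + x₂^2 > 0} and {(x₁, x₂) ∈ ℝ² | x₁ > 0 ∧ x₁*x₂ - x₂^2 > 0} of ℝ² are not homeomorphic. -/
/-!
The region `{x₁ > 0, x₁x₂ - x₂² > 0}` is the open wedge `0 < x₂ < x₁`, which is convex and hence
connected. The region `{x₁ > 0, x₁x₂ + x₂² > 0}` misses the line `x₂ = 0` but contains points on
both sides of it, so by the intermediate value theorem it is not connected.
-/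

theorem not_isPreconnected_of_forall_ne_zero {X : Type*} [TopologicalSpace X] {s : Set X}
    {f : X → ℝ} (hf : ContinuousOn f s) (hs : ∀ x ∈ s, f x ≠ 0) {a b : X} (ha : a ∈ s)
    (hb : b ∈ s) (hfa : f a < 0) (hfb : 0 < f b) : ¬ IsPreconnected s := by
  intro hconn
  obtain ⟨x, hx, hfx⟩ :=
    hconn.intermediate_value₂ ha hb hf continuousOn_const hfa.le hfb.le
  exact hs x hx hfx

theorem setOf_mul_sub_sq_pos_eq :
    {p : ℝ × ℝ | p.1 > 0 ∧ p.1 * p.2 - p.2 ^ 2 > 0} = {p : ℝ × ℝ | 0 < p.2 ∧ p.2 < p.1} := by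
  ext ⟨x, y⟩
  simp only [Set.mem_ofPred_eq]
  constructor
  · rintro ⟨hx, hxy⟩
    have hy : 0 < y := by nlinarith [sq_nonneg y]
    exact ⟨hy, by nlinarith⟩
  · rintro ⟨hy, hyx⟩
    exact ⟨hy.trans hyx, by nlinarith⟩

theorem convex_setOf_mul_sub_sq_pos :
    Convex ℝ {p : ℝ × ℝ | p.1 > 0 ∧ p.1 * p.2 - p.2 ^ 2 > 0} := by
  have hwedge : {p : ℝ × ℝ | 0 < p.2 ∧ p.2 < p.1} =
      {p | 0 < LinearMap.snd ℝ ℝ ℝ p} ∩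
        {p | (LinearMap.snd ℝ ℝ ℝ - LinearMap.fst ℝ ℝ ℝ) p < 0} := by
    ext p
    simp [sub_neg]
  rw [setOf_mul_sub_sq_pos_eq, hwedge]
  exact (convex_halfSpace_gt (LinearMap.isLinear _) 0).inter
    (convex_halfSpace_lt (LinearMap.isLinear _) 0)

theorem not_isPreconnected_setOf_mul_add_sq_pos :
    ¬ IsPreconnected {p : ℝ × ℝ | p.1 > 0 ∧ p.1 * p.2 + p.2 ^ 2 > 0} := by
  refine not_isPreconnected_of_forall_ne_zero (f := Prod.snd) (a := (1, -2)) (b := (1, 1))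
    continuous_snd.continuousOn ?_ (by norm_num) (by norm_num) (by norm_num) (by norm_num)
  rintro ⟨x, y⟩ ⟨-, hxy⟩ (rfl : y = 0)
  simp at hxy

/-- The subspaces `S^{(2,0,0)}(A₊) = {x₁ > 0 ∧ x₁x₂ + x₂² > 0}` and
`S^{(2,0,0)}(A₋) = {x₁ > 0 ∧ x₁x₂ - x₂² > 0}` of `ℝ²` are not homeomorphic. -/
theorem posDef_regions_not_homeomorphic :
    ¬ Nonempty
      (({p : ℝ × ℝ | p.1 > 0 ∧ p.1 * p.2 + p.2 ^ 2 > 0} : Set (ℝ × ℝ)) ≃ₜ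
       ({p : ℝ × ℝ | p.1 > 0 ∧ p.1 * p.2 - p.2 ^ 2 > 0} : Set (ℝ × ℝ))) := by
  rintro ⟨h⟩
  have : PreconnectedSpace {p : ℝ × ℝ | p.1 > 0 ∧ p.1 * p.2 - p.2 ^ 2 > 0} :=
    isPreconnected_iff_preconnectedSpace.mp convex_setOf_mul_sub_sq_pos.isPreconnected
  have : PreconnectedSpace {p : ℝ × ℝ | p.1 > 0 ∧ p.1 * p.2 + p.2 ^ 2 > 0} :=
    h.symm.surjective.denseRange.preconnectedSpace h.symm.continuous
  exact not_isPreconnected_setOf_mul_add_sq_pos (isPreconnected_iff_preconnectedSpace.mpr this)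
end

section
/- Fix an integer ℓ ≥ 3 and a sign ε ∈ {1, -1}, and let A : ℝ² → Matrix (Fin 2) (Fin 2) ℝ be A(x₁,x₂) = !![x₁, 0; 0, x₁*x₂ + ε*x₁^ℓ]. Suppose Φ : ℝ² → ℝ² is smooth on a neighborhood of 0 with Φ(0) = 0 and fderiv ℝ Φ 0 invertible, and X : ℝ² → Matrix (Fin 2) (Fin 2) ℝ is smooth on that neighborhood with X x invertible there, such that A(Φ x) = (X x)ᵀ * A x * (X x) for all x in the neighborhood. Then det (fderiv ℝ Φ 0) > 0, i.e., Φ preserves the orientation of ℝ². -/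
/-!
Write `A = diag(x₁, x₁ g)` with `g = x₂ + ε x₁^(ℓ-1)`, so that `g(0) = 0` and `dg(0) = dx₂`.
The `(0,0)` entry of `A ∘ Φ = Xᵀ A X` gives `Φ₁ = k x₁` with `k = X₀₀² + g X₁₀²`, and its
determinant gives `Φ₁² g(Φ) = (det X)² x₁² g`, hence `k² g(Φ) = (det X)² g` off the axis `x₁ = 0`.
Differentiating both relations at `0` shows that `dΦ(0)` is lower triangular with diagonal entries
`k(0) = X₀₀(0)² ≥ 0` and `d` satisfying `k(0)² d = det X(0)² > 0`, so both are positive.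
-/

attribute [local instance] Matrix.normedAddCommGroup Matrix.normedSpace

open scoped Matrix

open Filter Topology

namespace Matrix

variable {R : Type*} [CommRing R]

theorem det_transpose_mul_mul_self {n : Type*} [Fintype n] [DecidableEq n] (X M : Matrix n n R) :
    (Xᵀ * M * X).det = X.det ^ 2 * M.det := by
  rw [det_mul, det_mul, det_transpose]
  ring

theorem transpose_mul_diag_mul_apply_zero_zero (X : Matrix (Fin 2) (Fin 2) R) (a b : R) :
    (Xᵀ * !![a, 0; 0, b] * X) 0 0 = a * X 0 0 ^ 2 + b * X 1 0 ^ 2 := by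
  simp only [mul_apply, transpose_apply, of_apply, cons_val', cons_val_fin_one, Fin.sum_univ_two,
    cons_val_zero, cons_val_one, mul_zero, add_zero, zero_add]
  ring

/-- The `(0,0)` entry and the determinant of the equation, arranged so that `p²` is the only
factor that may vanish. -/
theorem diag_isotropy {p u a b : R} {X : Matrix (Fin 2) (Fin 2) R}
    (h : !![u, 0; 0, u * a] = Xᵀ * !![p, 0; 0, p * b] * X) :
    u = (X 0 0 ^ 2 + b * X 1 0 ^ 2) * p ∧
      p ^ 2 * ((X 0 0 ^ 2 + b * X 1 0 ^ 2) ^ 2 * a - X.det ^ 2 * b) = 0 := by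
  have hu : u = (X 0 0 ^ 2 + b * X 1 0 ^ 2) * p := by
    have h00 := congrFun (congrFun h 0) 0
    rw [transpose_mul_diag_mul_apply_zero_zero] at h00
    simp only [of_apply, cons_val', cons_val_zero, empty_val', cons_val_fin_one] at h00
    linear_combination h00
  have hdet := congrArg det h
  rw [det_transpose_mul_mul_self, det_fin_two_of, det_fin_two_of] at hdet
  refine ⟨hu, ?_⟩
  rw [hu] at hdet
  linear_combination hdet

end Matrix

theorem LinearMap.det_finTwoProd {R : Type*} [CommRing R] (f : R × R →ₗ[R] R × R) :
    LinearMap.det f = (f (1, 0)).1 * (f (0, 1)).2 - (f (0, 1)).1 * (f (1, 0)).2 := by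
  rw [← LinearMap.det_toMatrix (Module.Basis.finTwoProd R), Matrix.det_fin_two]
  simp [LinearMap.toMatrix_apply]

section Calculus

variable {𝕜 : Type*} [NontriviallyNormedField 𝕜] {E F : Type*} [NormedAddCommGroup E]
  [NormedSpace 𝕜 E] [NormedAddCommGroup F] [NormedSpace 𝕜 F]

theorem DifferentiableAt.matrix_det {n : Type*} [Fintype n] [DecidableEq n]
    {X : E → Matrix n n 𝕜} {x : E} (hX : DifferentiableAt 𝕜 X x) :
    DifferentiableAt 𝕜 (fun y => (X y).det) x := by
  have := fun i j => differentiableAt_pi.1 (differentiableAt_pi.1 hX i) j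
  simp only [Matrix.det_apply]
  fun_prop

theorem DifferentiableAt.hasFDerivAt_mul_of_eq_zero {k G : E → 𝕜} {G' : E →L[𝕜] 𝕜} {x : E}
    (hk : DifferentiableAt 𝕜 k x) (hG : HasFDerivAt G G' x) (hG0 : G x = 0) :
    HasFDerivAt (fun y => k y * G y) (k x • G') x :=
  (hk.hasFDerivAt.fun_mul hG).congr_fderiv (by ext; simp [hG0])

theorem HasFDerivAt.apply_eq_zero_of_eventually_eq_zero_on_line {f : E → F} {f' : E →L[𝕜] F}
    {x v : E} (hf : HasFDerivAt f f' x) (h : ∀ᶠ t in 𝓝 (0 : 𝕜), f (x + t • v) = 0) :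
    f' v = 0 :=
  (hf.hasLineDerivAt v).unique ((hasDerivAt_const (0 : 𝕜) (0 : F)).congr_of_eventuallyEq h)

end Calculus

theorem HasFDerivAt.eq_zero_of_eventually_eq_zero_off_axis {F : Type*} [NormedAddCommGroup F]
    [NormedSpace ℝ F] {f : ℝ × ℝ → F} {f' : ℝ × ℝ →L[ℝ] F} (hf : HasFDerivAt f f' 0)
    (hf0 : f 0 = 0) (h : ∀ᶠ x in 𝓝 0, x.1 ≠ 0 → f x = 0) : f' = 0 := by
  have off_axis : ∀ v : ℝ × ℝ, v.1 ≠ 0 → f' v = 0 := by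
    intro v hv
    refine hf.apply_eq_zero_of_eventually_eq_zero_on_line ?_
    have hline : Tendsto (fun t : ℝ => (0 : ℝ × ℝ) + t • v) (𝓝 0) (𝓝 0) :=
      Continuous.tendsto' (by fun_prop) 0 0 (by simp)
    filter_upwards [hline h] with t ht
    rcases eq_or_ne t 0 with rfl | ht0
    · simpa using hf0
    · exact ht (by simp [ht0, hv])
  refine ContinuousLinearMap.ext fun v => ?_
  by_cases hv : v.1 = 0
  · calc f' v = f' (v + (1, 0)) - f' (1, 0) := by simp
      _ = 0 := by rw [off_axis _ (by simp [hv]), off_axis _ (by simp), sub_self]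
  · simpa using off_axis v hv

theorem hasFDerivAt_fst_pow_zero {𝕜 F : Type*} [NontriviallyNormedField 𝕜] [NormedAddCommGroup F]
    [NormedSpace 𝕜 F] {n : ℕ} (hn : 2 ≤ n) :
    HasFDerivAt (fun p : 𝕜 × F => p.1 ^ n) (0 : 𝕜 × F →L[𝕜] 𝕜) 0 := by
  have := (hasFDerivAt_fst (𝕜 := 𝕜) (p := (0 : 𝕜 × F))).pow n
  exact this.congr_fderiv (by ext <;> simp [zero_pow (by omega : n - 1 ≠ 0)])

theorem fst_fderiv_eq_of_eventually_fst_eq_mul {Φ : ℝ × ℝ → ℝ × ℝ} {D : ℝ × ℝ →L[ℝ] ℝ × ℝ}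
    {k : ℝ × ℝ → ℝ} (hΦ : HasFDerivAt Φ D 0) (hk : DifferentiableAt ℝ k 0)
    (h : ∀ᶠ x in 𝓝 0, (Φ x).1 = k x * x.1) (v : ℝ × ℝ) : (D v).1 = k 0 * v.1 := by
  have hfst : HasFDerivAt (fun x : ℝ × ℝ => k x * x.1) (k 0 • ContinuousLinearMap.fst ℝ ℝ ℝ) 0 :=
    hk.hasFDerivAt_mul_of_eq_zero hasFDerivAt_fst rfl
  simpa using DFunLike.congr_fun (hΦ.fst.unique (hfst.congr_of_eventuallyEq h)) v

theorem smul_comp_eq_of_eventually_mul_comp_eq_off_axis {Φ : ℝ × ℝ → ℝ × ℝ}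
    {D : ℝ × ℝ →L[ℝ] ℝ × ℝ} {g k₁ k₂ : ℝ × ℝ → ℝ} {g' : ℝ × ℝ →L[ℝ] ℝ}
    (hΦ : HasFDerivAt Φ D 0) (hΦ0 : Φ 0 = 0) (hg : HasFDerivAt g g' 0) (hg0 : g 0 = 0)
    (hk₁ : DifferentiableAt ℝ k₁ 0) (hk₂ : DifferentiableAt ℝ k₂ 0)
    (h : ∀ᶠ x in 𝓝 0, x.1 ≠ 0 → k₁ x * g (Φ x) = k₂ x * g x) :
    k₁ 0 • g'.comp D = k₂ 0 • g' := by
  have hgΦ : HasFDerivAt (fun x => g (Φ x)) (g'.comp D) 0 := (hΦ0 ▸ hg).comp 0 hΦ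
  have hF := (hk₁.hasFDerivAt_mul_of_eq_zero hgΦ (by simp [hΦ0, hg0])).sub
    (hk₂.hasFDerivAt_mul_of_eq_zero hg hg0)
  exact sub_eq_zero.1 <| hF.eq_zero_of_eventually_eq_zero_off_axis (by simp [hΦ0, hg0])
    (h.mono fun x hx hx1 => sub_eq_zero.2 (hx hx1))

theorem det_fderiv_pos_of_diag_isotropy {g : ℝ × ℝ → ℝ} {g' : ℝ × ℝ →L[ℝ] ℝ}
    (hg : HasFDerivAt g g' 0) (hg0 : g 0 = 0) (hg' : g' (0, 1) ≠ 0) {Φ : ℝ × ℝ → ℝ × ℝ}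
    {X : ℝ × ℝ → Matrix (Fin 2) (Fin 2) ℝ} {s : Set (ℝ × ℝ)} (hs : s ∈ 𝓝 0)
    (hΦ : DifferentiableAt ℝ Φ 0) (hΦ0 : Φ 0 = 0) (hX : DifferentiableAt ℝ X 0)
    (hX0 : IsUnit (X 0))
    (heq : ∀ x ∈ s,
      !![(Φ x).1, 0; 0, (Φ x).1 * g (Φ x)] = (X x)ᵀ * !![x.1, 0; 0, x.1 * g x] * X x) :
    0 < LinearMap.det (fderiv ℝ Φ 0 : ℝ × ℝ →ₗ[ℝ] ℝ × ℝ) := by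
  set D := fderiv ℝ Φ 0
  set k : ℝ × ℝ → ℝ := fun x => X x 0 0 ^ 2 + g x * X x 1 0 ^ 2
  have hk : DifferentiableAt ℝ k 0 := by
    have := fun i j => differentiableAt_pi.1 (differentiableAt_pi.1 hX i) j
    have := hg.differentiableAt
    fun_prop
  have hiso := fun x hx => Matrix.diag_isotropy (heq x hx)
  have hfst : ∀ v, (D v).1 = k 0 * v.1 :=
    fst_fderiv_eq_of_eventually_fst_eq_mul hΦ.hasFDerivAt hk
      (eventually_of_mem hs fun x hx => (hiso x hx).1)
  have hsnd : k 0 ^ 2 • g'.comp D = (X 0).det ^ 2 • g' :=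
    smul_comp_eq_of_eventually_mul_comp_eq_off_axis hΦ.hasFDerivAt hΦ0 hg hg0 (hk.pow 2)
      (hX.matrix_det.pow 2) <| eventually_of_mem hs fun x hx hx1 =>
        sub_eq_zero.1 ((mul_eq_zero.1 (hiso x hx).2).resolve_left (pow_ne_zero 2 hx1))
  have hd : k 0 ^ 2 * (D (0, 1)).2 = (X 0).det ^ 2 := by
    have hD : D (0, 1) = (D (0, 1)).2 • (0, 1) := by ext <;> simp [hfst]
    have h01 := DFunLike.congr_fun hsnd (0, 1)
    rw [smul_apply, ContinuousLinearMap.comp_apply, hD, map_smul] at h01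
    exact mul_right_cancel₀ hg' (by simpa [mul_assoc] using h01)
  have hk0 : 0 ≤ k 0 := by simp only [k, hg0]; positivity
  have hdet : (X 0).det ≠ 0 := ((Matrix.isUnit_iff_isUnit_det _).1 hX0).ne_zero
  have hpos : 0 < k 0 ^ 2 * (D (0, 1)).2 := hd ▸ by positivity
  have hk0' : 0 < k 0 := hk0.lt_of_ne' (by rintro h0; simp [h0] at hpos)
  have hd0 : 0 < (D (0, 1)).2 := pos_of_mul_pos_right hpos (by positivity)
  rw [LinearMap.det_finTwoProd]
  simpa [hfst] using mul_pos hk0' hd0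

theorem isotropy_orientation_preserving_class8_general (ℓ : ℕ) (hℓ : 3 ≤ ℓ)
    (ε : ℝ)
    (A : ℝ × ℝ → Matrix (Fin 2) (Fin 2) ℝ)
    (hA : A = fun p => !![p.1, 0; 0, p.1 * p.2 + ε * p.1 ^ ℓ])
    (Φ : ℝ × ℝ → ℝ × ℝ) (X : ℝ × ℝ → Matrix (Fin 2) (Fin 2) ℝ)
    (s : Set (ℝ × ℝ)) (hs : s ∈ nhds (0 : ℝ × ℝ))
    (hΦ : ContDiffOn ℝ (⊤ : ℕ∞) Φ s) (hΦ0 : Φ 0 = 0)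
    (hX : ContDiffOn ℝ (⊤ : ℕ∞) X s) (hXinv : ∀ x ∈ s, IsUnit (X x))
    (heq : ∀ x ∈ s, A (Φ x) = (X x)ᵀ * A x * X x) :
    0 < LinearMap.det ((fderiv ℝ Φ 0) : (ℝ × ℝ) →ₗ[ℝ] (ℝ × ℝ)) := by
  set g : ℝ × ℝ → ℝ := fun p => p.2 + ε * p.1 ^ (ℓ - 1)
  have hpow : HasFDerivAt (fun p : ℝ × ℝ => p.1 ^ (ℓ - 1)) 0 0 :=
    hasFDerivAt_fst_pow_zero (by omega)
  have hg : HasFDerivAt g (ContinuousLinearMap.snd ℝ ℝ ℝ) 0 := by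
    simpa using hasFDerivAt_snd.fun_add (hpow.const_mul ε)
  have hAg : A = fun p => !![p.1, 0; 0, p.1 * g p] := by
    rw [hA]
    funext p
    obtain ⟨m, rfl⟩ : ∃ m, ℓ = m + 1 := ⟨ℓ - 1, by omega⟩
    simp only [g, Nat.add_sub_cancel]
    ring_nf
  subst hAg
  exact det_fderiv_pos_of_diag_isotropy hg (by simp [g, zero_pow (by omega : ℓ - 1 ≠ 0)])
    (by simp) hs ((hΦ.contDiffAt hs).differentiableAt (by simp)) hΦ0
    ((hX.contDiffAt hs).differentiableAt (by simp)) (hXinv 0 (mem_of_mem_nhds hs)) heq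

/-- For `A(x₁,x₂) = !![x₁, 0; 0, x₁x₂ + ε x₁^ℓ]` (`ℓ ≥ 3`, `ε = ±1`), any diffeomorphism-germ
`Φ` at `0` in the isotropy group `𝒟_A` (i.e. with `A ∘ Φ = Xᵀ A X` near `0` for an
invertible-matrix-valued `X`) preserves the orientation of `ℝ²`. -/
theorem isotropy_orientation_preserving_class8 (ℓ : ℕ) (hℓ : 3 ≤ ℓ)
    (ε : ℝ) (hε : ε = 1 ∨ ε = -1)
    (A : ℝ × ℝ → Matrix (Fin 2) (Fin 2) ℝ)
    (hA : A = fun p => !![p.1, 0; 0, p.1 * p.2 + ε * p.1 ^ ℓ])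
    (Φ : ℝ × ℝ → ℝ × ℝ) (X : ℝ × ℝ → Matrix (Fin 2) (Fin 2) ℝ)
    (s : Set (ℝ × ℝ)) (hs : s ∈ nhds (0 : ℝ × ℝ))
    (hΦ : ContDiffOn ℝ (⊤ : ℕ∞) Φ s) (hΦ0 : Φ 0 = 0)
    (hdΦ : IsUnit (fderiv ℝ Φ 0))
    (hX : ContDiffOn ℝ (⊤ : ℕ∞) X s) (hXinv : ∀ x ∈ s, IsUnit (X x))
    (heq : ∀ x ∈ s, A (Φ x) = (X x)ᵀ * A x * X x) :
    0 < LinearMap.det ((fderiv ℝ Φ 0) : (ℝ × ℝ) →ₗ[ℝ] (ℝ × ℝ)) :=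
  isotropy_orientation_preserving_class8_general ℓ hℓ ε A hA Φ X s hs hΦ hΦ0 hX hXinv heq
end

section
/- Fix a sign ε ∈ {1, -1}, and let A : ℝ² → Matrix (Fin 2) (Fin 2) ℝ be A(x₁,x₂) = !![x₁, 0; 0, ε*x₁^2 + x₂^3]. Suppose Φ : ℝ² → ℝ² is smooth on a neighborhood of 0 with Φ(0) = 0 and fderiv ℝ Φ 0 invertible, and X : ℝ² → Matrix (Fin 2) (Fin 2) ℝ is smooth on that neighborhood with X x invertible there, such that A(Φ x) = (X x)ᵀ * A x * (X x) for all x in the neighborhood. Then det (fderiv ℝ Φ 0) > 0, i.e., Φ preserves the orientation of ℝ². -/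
/-!
The `(0, 0)` entry of `A ∘ Φ = Xᵀ A X` reads `Φ₁ = X₀₀² x₁ + X₁₀² (ε x₁² + x₂³)`. Hence
`∂₁Φ₁(0) = X₀₀(0)² ≥ 0`, and `Φ₁` vanishes to third order along the `x₂`-axis, so `∂₂Φ₁(0) = 0`.
On that axis the `(1, 1)` entry then gives `Φ₂(0, t)³ = t³ (X₁₁² - ε X₁₀⁴ t³)`, so
`(∂₂Φ₂(0))³ = X₁₁(0)² ≥ 0`. The Jacobian at `0` is thus triangular with nonnegative diagonal,
and its determinant, being nonzero, is positive.
-/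

attribute [local instance] Matrix.normedAddCommGroup Matrix.normedSpace

open scoped Matrix

open Filter Topology

theorem Matrix.transpose_mul_diag_mul_apply_self {R : Type*} [CommRing R]
    (X : Matrix (Fin 2) (Fin 2) R) (a b : R) (i : Fin 2) :
    (Xᵀ * !![a, 0; 0, b] * X) i i = X 0 i ^ 2 * a + X 1 i ^ 2 * b := by
  simp [Matrix.mul_apply, Fin.sum_univ_two]
  ring

theorem LinearMap.det_prod_eq {R : Type*} [CommRing R] (L : (R × R) →ₗ[R] (R × R)) :
    LinearMap.det L = (L (1, 0)).1 * (L (0, 1)).2 - (L (0, 1)).1 * (L (1, 0)).2 := by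
  rw [← LinearMap.det_toMatrix (Module.Basis.finTwoProd R), Matrix.det_fin_two]
  simp [LinearMap.toMatrix_apply]

theorem HasDerivAt.pow_eq_of_eventually_pow_eq {𝕜 : Type*} [NontriviallyNormedField 𝕜]
    {f g : 𝕜 → 𝕜} {f' : 𝕜} (n : ℕ) (hf : HasDerivAt f f' 0) (hf0 : f 0 = 0)
    (hg : ContinuousAt g 0) (hfg : ∀ᶠ t in 𝓝 0, f t ^ n = t ^ n * g t) : f' ^ n = g 0 := by
  have hslope : Tendsto (fun t => (f t / t) ^ n) (𝓝[≠] 0) (𝓝 (f' ^ n)) := by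
    refine ((hasDerivAt_iff_tendsto_slope.mp hf).pow n).congr fun t => ?_
    simp [slope_def_field, hf0]
  refine tendsto_nhds_unique hslope (hg.tendsto.mono_left nhdsWithin_le_nhds |>.congr' ?_)
  filter_upwards [nhdsWithin_le_nhds hfg, self_mem_nhdsWithin] with t ht ht0
  rw [div_pow, ht, mul_div_cancel_left₀ _ (pow_ne_zero n ht0)]

section Axes

variable {𝕜 F : Type*} [NontriviallyNormedField 𝕜] [NormedAddCommGroup F] [NormedSpace 𝕜 F]

theorem tendsto_mk_zero_left_nhds_zero : Tendsto (fun t : 𝕜 => (t, (0 : 𝕜))) (𝓝 0) (𝓝 0) :=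
  tendsto_id.prodMk_nhds tendsto_const_nhds

theorem tendsto_mk_zero_right_nhds_zero : Tendsto (fun t : 𝕜 => ((0 : 𝕜), t)) (𝓝 0) (𝓝 0) :=
  tendsto_const_nhds.prodMk_nhds tendsto_id

theorem HasFDerivAt.hasDerivAt_comp_mk_zero_left {f : 𝕜 × 𝕜 → F} {L : 𝕜 × 𝕜 →L[𝕜] F}
    (hf : HasFDerivAt f L 0) : HasDerivAt (fun t => f (t, 0)) (L (1, 0)) 0 := by
  have hc : HasDerivAt (fun t : 𝕜 => (t, (0 : 𝕜))) (1, 0) 0 :=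
    (hasDerivAt_id _).prodMk (hasDerivAt_const _ _)
  exact hf.comp_hasDerivAt (f := fun t : 𝕜 => (t, (0 : 𝕜))) 0 hc

theorem HasFDerivAt.hasDerivAt_comp_mk_zero_right {f : 𝕜 × 𝕜 → F} {L : 𝕜 × 𝕜 →L[𝕜] F}
    (hf : HasFDerivAt f L 0) : HasDerivAt (fun t => f (0, t)) (L (0, 1)) 0 := by
  have hc : HasDerivAt (fun t : 𝕜 => ((0 : 𝕜), t)) (0, 1) 0 :=
    (hasDerivAt_const _ _).prodMk (hasDerivAt_id _)
  exact hf.comp_hasDerivAt (f := fun t : 𝕜 => ((0 : 𝕜), t)) 0 hc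

end Axes

namespace Isotropy

variable {ε : ℝ} {Φ : ℝ × ℝ → ℝ × ℝ} {X : ℝ × ℝ → Matrix (Fin 2) (Fin 2) ℝ}
  {L : ℝ × ℝ →L[ℝ] ℝ × ℝ}

theorem fst_apply_one_zero_eq (hL : HasFDerivAt Φ L 0) (hΦ0 : Φ 0 = 0) (hX : ContinuousAt X 0)
    (hΦ : ∀ᶠ p in 𝓝 0, (Φ p).1 = X p 0 0 ^ 2 * p.1 + X p 1 0 ^ 2 * (ε * p.1 ^ 2 + p.2 ^ 3)) :
    (L (1, 0)).1 = X 0 0 0 ^ 2 := by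
  have hXt (i j : Fin 2) : ContinuousAt (fun t : ℝ => X (t, 0) i j) 0 :=
    (continuous_apply_apply i j).continuousAt.comp (hX.comp_of_eq (by fun_prop) rfl)
  have hg : ContinuousAt (fun t : ℝ => X (t, 0) 0 0 ^ 2 + X (t, 0) 1 0 ^ 2 * (ε * t)) 0 :=
    ((hXt 0 0).pow 2).add (((hXt 1 0).pow 2).mul (by fun_prop))
  have h := hL.fst.hasDerivAt_comp_mk_zero_left.pow_eq_of_eventually_pow_eq 1
    (congrArg Prod.fst hΦ0) hg <| (tendsto_mk_zero_left_nhds_zero.eventually hΦ).mono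
      fun t ht => by simp only [ht]; ring
  simpa [Prod.mk_zero_zero] using h

theorem fst_apply_zero_one_eq_zero (hL : HasFDerivAt Φ L 0) (hΦ0 : Φ 0 = 0)
    (hX : ContinuousAt X 0)
    (hΦ : ∀ᶠ p in 𝓝 0, (Φ p).1 = X p 0 0 ^ 2 * p.1 + X p 1 0 ^ 2 * (ε * p.1 ^ 2 + p.2 ^ 3)) :
    (L (0, 1)).1 = 0 := by
  have hXt : ContinuousAt (fun t : ℝ => X (0, t) 1 0) 0 :=
    (continuous_apply_apply 1 0).continuousAt.comp (hX.comp_of_eq (by fun_prop) rfl)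
  have hg : ContinuousAt (fun t : ℝ => X (0, t) 1 0 ^ 2 * t ^ 2) 0 :=
    (hXt.pow 2).mul (by fun_prop)
  have h := hL.fst.hasDerivAt_comp_mk_zero_right.pow_eq_of_eventually_pow_eq 1
    (congrArg Prod.fst hΦ0) hg <| (tendsto_mk_zero_right_nhds_zero.eventually hΦ).mono
      fun t ht => by simp only [ht]; ring
  simpa [Prod.mk_zero_zero] using h

theorem snd_apply_zero_one_pow_three_eq (hL : HasFDerivAt Φ L 0) (hΦ0 : Φ 0 = 0)
    (hX : ContinuousAt X 0)
    (hΦ₁ : ∀ᶠ p in 𝓝 0, (Φ p).1 = X p 0 0 ^ 2 * p.1 + X p 1 0 ^ 2 * (ε * p.1 ^ 2 + p.2 ^ 3))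
    (hΦ₂ : ∀ᶠ p in 𝓝 0, ε * (Φ p).1 ^ 2 + (Φ p).2 ^ 3 =
      X p 0 1 ^ 2 * p.1 + X p 1 1 ^ 2 * (ε * p.1 ^ 2 + p.2 ^ 3)) :
    (L (0, 1)).2 ^ 3 = X 0 1 1 ^ 2 := by
  have hXt (i j : Fin 2) : ContinuousAt (fun t : ℝ => X (0, t) i j) 0 :=
    (continuous_apply_apply i j).continuousAt.comp (hX.comp_of_eq (by fun_prop) rfl)
  have hg : ContinuousAt (fun t : ℝ => X (0, t) 1 1 ^ 2 - ε * X (0, t) 1 0 ^ 4 * t ^ 3) 0 :=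
    ((hXt 1 1).pow 2).sub ((continuousAt_const.mul ((hXt 1 0).pow 4)).mul (by fun_prop))
  have h := hL.snd.hasDerivAt_comp_mk_zero_right.pow_eq_of_eventually_pow_eq 3
    (congrArg Prod.snd hΦ0) hg <| (tendsto_mk_zero_right_nhds_zero.eventually (hΦ₁.and hΦ₂)).mono
      fun t ⟨h₁, h₂⟩ => by
        simp only at h₁ h₂ ⊢
        linear_combination h₂ - ε * ((Φ (0, t)).1 + X (0, t) 1 0 ^ 2 * t ^ 3) * h₁
  simpa [Prod.mk_zero_zero] using h

end Isotropy

theorem isotropy_orientation_preserving_class10_general (ε : ℝ)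
    (A : ℝ × ℝ → Matrix (Fin 2) (Fin 2) ℝ)
    (hA : A = fun p => !![p.1, 0; 0, ε * p.1 ^ 2 + p.2 ^ 3])
    (Φ : ℝ × ℝ → ℝ × ℝ) (X : ℝ × ℝ → Matrix (Fin 2) (Fin 2) ℝ)
    (s : Set (ℝ × ℝ)) (hs : s ∈ nhds (0 : ℝ × ℝ))
    (hΦ : ContDiffOn ℝ (⊤ : ℕ∞) Φ s) (hΦ0 : Φ 0 = 0)
    (hdΦ : IsUnit (fderiv ℝ Φ 0))
    (hX : ContDiffOn ℝ (⊤ : ℕ∞) X s)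
    (heq : ∀ x ∈ s, A (Φ x) = (X x)ᵀ * A x * X x) :
    0 < LinearMap.det ((fderiv ℝ Φ 0) : (ℝ × ℝ) →ₗ[ℝ] (ℝ × ℝ)) := by
  set L := fderiv ℝ Φ 0
  have hL : HasFDerivAt Φ L 0 := ((hΦ.contDiffAt hs).differentiableAt (by simp)).hasFDerivAt
  have hXc : ContinuousAt X 0 := hX.continuousOn.continuousAt hs
  have hdiag : ∀ᶠ p in 𝓝 0,
      (Φ p).1 = X p 0 0 ^ 2 * p.1 + X p 1 0 ^ 2 * (ε * p.1 ^ 2 + p.2 ^ 3) ∧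
      ε * (Φ p).1 ^ 2 + (Φ p).2 ^ 3 =
        X p 0 1 ^ 2 * p.1 + X p 1 1 ^ 2 * (ε * p.1 ^ 2 + p.2 ^ 3) := by
    filter_upwards [hs] with p hp
    have h (i : Fin 2) := congrFun (congrFun (heq p hp) i) i
    simp only [hA, Matrix.transpose_mul_diag_mul_apply_self] at h
    exact ⟨by simpa using h 0, by simpa using h 1⟩
  have hΦ₁ := hdiag.mono fun _ => And.left
  have hΦ₂ := hdiag.mono fun _ => And.right
  have hdet : LinearMap.det (L : (ℝ × ℝ) →ₗ[ℝ] (ℝ × ℝ)) = X 0 0 0 ^ 2 * (L (0, 1)).2 := by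
    rw [LinearMap.det_prod_eq]
    simp [Isotropy.fst_apply_one_zero_eq hL hΦ0 hXc hΦ₁,
      Isotropy.fst_apply_zero_one_eq_zero hL hΦ0 hXc hΦ₁]
  have hd : 0 ≤ (L (0, 1)).2 := (Odd.pow_nonneg_iff (by decide : Odd 3)).mp <| by
    rw [Isotropy.snd_apply_zero_one_pow_three_eq hL hΦ0 hXc hΦ₁ hΦ₂]; positivity
  have hne : LinearMap.det (L : (ℝ × ℝ) →ₗ[ℝ] (ℝ × ℝ)) ≠ 0 :=
    ((LinearMap.isUnit_iff_isUnit_det _).mp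
      (hdΦ.map ContinuousLinearMap.toLinearMapRingHom)).ne_zero
  rw [hdet] at hne ⊢
  exact lt_of_le_of_ne (by positivity) hne.symm

/-- For `A(x₁,x₂) = !![x₁, 0; 0, ε x₁² + x₂³]` (`ε = ±1`), any diffeomorphism-germ `Φ` at `0`
in the isotropy group `𝒟_A` (i.e. with `A ∘ Φ = Xᵀ A X` near `0` for an
invertible-matrix-valued `X`) preserves the orientation of `ℝ²`. -/
theorem isotropy_orientation_preserving_class10 (ε : ℝ) (hε : ε = 1 ∨ ε = -1)
    (A : ℝ × ℝ → Matrix (Fin 2) (Fin 2) ℝ)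
    (hA : A = fun p => !![p.1, 0; 0, ε * p.1 ^ 2 + p.2 ^ 3])
    (Φ : ℝ × ℝ → ℝ × ℝ) (X : ℝ × ℝ → Matrix (Fin 2) (Fin 2) ℝ)
    (s : Set (ℝ × ℝ)) (hs : s ∈ nhds (0 : ℝ × ℝ))
    (hΦ : ContDiffOn ℝ (⊤ : ℕ∞) Φ s) (hΦ0 : Φ 0 = 0)
    (hdΦ : IsUnit (fderiv ℝ Φ 0))
    (hX : ContDiffOn ℝ (⊤ : ℕ∞) X s) (hXinv : ∀ x ∈ s, IsUnit (X x))
    (heq : ∀ x ∈ s, A (Φ x) = (X x)ᵀ * A x * X x) :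
    0 < LinearMap.det ((fderiv ℝ Φ 0) : (ℝ × ℝ) →ₗ[ℝ] (ℝ × ℝ)) :=
  isotropy_orientation_preserving_class10_general ε A hA Φ X s hs hΦ hΦ0 hdΦ hX heq
end

section
/- Fix an integer ℓ ≥ 2, and let A : ℝ² → Matrix (Fin 3) (Fin 3) ℝ be the symmetric matrix-valued map with rows (x₁, x₂^ℓ, 0), (x₂^ℓ, x₁, 0), (0, 0, x₂). Suppose Φ : ℝ² → ℝ² is smooth on a neighborhood of 0 with Φ(0) = 0 and fderiv ℝ Φ 0 invertible, and X : ℝ² → Matrix (Fin 3) (Fin 3) ℝ is smooth on that neighborhood with X x invertible there, such that A(Φ x) = (X x)ᵀ * A x * (X x) for all x in the neighborhood. Then det (fderiv ℝ Φ 0) > 0, i.e., Φ preserves the orientation of ℝ². -/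
attribute [local instance] Matrix.normedAddCommGroup Matrix.normedSpace

open scoped Matrix

/-!
Taking determinants in `A ∘ Φ = Xᵀ A X` gives `det A (Φ x) = (det X x)² · det A x`, where
`det A p = p₁² p₂ - p₂^(2ℓ+1)` has the cubic `p₁² p₂` as leading term because `ℓ ≥ 2`. Rescaling
along rays through `0`, the derivative `L = dΦ(0)` therefore multiplies this cubic by
`u = (det X 0)² > 0`. Writing `L = [[a, b], [c, d]]`, this forces `c = 0` and `a² d = u`, so
`det L = a d` has the sign of `a`. Finally `A (t, 0)` is positive semidefinite for `t > 0`, hence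
so is its congruent `A (Φ (t, 0))`, whose top-left entry `Φ₁ (t, 0)` is thus nonnegative; in the
limit `a ≥ 0`.
-/

open Filter Topology

theorem HasFDerivAt.tendsto_inv_smul_comp_smul {𝕜 E F : Type*} [NontriviallyNormedField 𝕜]
    [NormedAddCommGroup E] [NormedSpace 𝕜 E] [NormedAddCommGroup F] [NormedSpace 𝕜 F]
    {Φ : E → F} {L : E →L[𝕜] F} (hΦ : HasFDerivAt Φ L 0) (hΦ0 : Φ 0 = 0) (v : E) :
    Tendsto (fun t : 𝕜 => t⁻¹ • Φ (t • v)) (𝓝[≠] 0) (𝓝 (L v)) := by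
  have hray : HasDerivAt (fun t : 𝕜 => Φ (t • v)) (L v) 0 := by
    have hline : HasDerivAt (fun t : 𝕜 => t • v) v 0 := by
      simpa using (hasDerivAt_id (0 : 𝕜)).smul_const v
    exact (zero_smul 𝕜 v ▸ hΦ).comp_hasDerivAt 0 hline
  rw [hasDerivAt_iff_tendsto_slope] at hray
  exact hray.congr fun t => by simp [slope, hΦ0]

theorem HasFDerivAt.apply_nonneg_of_eventually_nonneg {E : Type*} [NormedAddCommGroup E]
    [NormedSpace ℝ E] {f : E → ℝ} {f' : E →L[ℝ] ℝ} (hf : HasFDerivAt f f' 0) (hf0 : f 0 = 0)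
    {v : E} (hpos : ∀ᶠ t in 𝓝[>] (0 : ℝ), 0 ≤ f (t • v)) : 0 ≤ f' v := by
  refine ge_of_tendsto ((hf.tendsto_inv_smul_comp_smul hf0 v).mono_left
    (nhdsWithin_mono 0 fun t (ht : t ∈ Set.Ioi 0) => ne_of_gt ht)) ?_
  filter_upwards [hpos, self_mem_nhdsWithin] with t ht (htpos : 0 < t)
  exact smul_nonneg (inv_nonneg.mpr htpos.le) ht

lemma mul_sub_mul_pos_of_cubic_relations {a b c d u : ℝ} (hu : 0 < u) (ha : 0 ≤ a)
    (hac : a ^ 2 * c = 0) (hbd : b ^ 2 * d = 0) (hplus : (a + b) ^ 2 * (c + d) = u)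
    (hminus : (a - b) ^ 2 * (c - d) = -u) : 0 < a * d - b * c := by
  have hdiff : a ^ 2 * d + 2 * a * b * c = u := by linear_combination (hplus - hminus) / 2 - hbd
  rcases mul_eq_zero.mp hac with ha2 | hc
  · obtain rfl : a = 0 := pow_eq_zero_iff two_ne_zero |>.mp ha2
    linarith
  · subst hc
    have hd : 0 < d := by nlinarith [sq_nonneg a]
    have ha : 0 < a := ha.lt_of_ne fun h => by subst h; linarith
    simpa using mul_pos ha hd

lemma LinearMap.det_prod_eq_entries (L : ℝ × ℝ →ₗ[ℝ] ℝ × ℝ) :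
    LinearMap.det L = (L (1, 0)).1 * (L (0, 1)).2 - (L (0, 1)).1 * (L (1, 0)).2 := by
  rw [← LinearMap.det_toMatrix (Module.Basis.finTwoProd ℝ), Matrix.det_fin_two]
  simp [LinearMap.toMatrix_apply]

lemma LinearMap.det_pos_of_cubic_invariant (L : ℝ × ℝ →ₗ[ℝ] ℝ × ℝ) {u : ℝ} (hu : 0 < u)
    (hL : ∀ v, (L v).1 ^ 2 * (L v).2 = u * (v.1 ^ 2 * v.2)) (ha : 0 ≤ (L (1, 0)).1) :
    0 < LinearMap.det L := by
  have hplus : L (1, 1) = L (1, 0) + L (0, 1) := by rw [← map_add]; norm_num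
  have hminus : L (1, -1) = L (1, 0) - L (0, 1) := by rw [← map_sub]; norm_num
  rw [LinearMap.det_prod_eq_entries]
  refine mul_sub_mul_pos_of_cubic_relations hu ha ?_ ?_ ?_ ?_
  · simpa using hL (1, 0)
  · simpa using hL (0, 1)
  · simpa [hplus] using hL (1, 1)
  · simpa [hminus] using hL (1, -1)

def sym3Class5 (ℓ : ℕ) (p : ℝ × ℝ) : Matrix (Fin 3) (Fin 3) ℝ :=
  !![p.1, p.2 ^ ℓ, 0; p.2 ^ ℓ, p.1, 0; 0, 0, p.2]

def rescaledDet (ℓ : ℕ) (t : ℝ) (p : ℝ × ℝ) : ℝ :=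
  p.1 ^ 2 * p.2 - t ^ (2 * ℓ - 2) * p.2 ^ (2 * ℓ + 1)

lemma det_sym3Class5_smul {ℓ : ℕ} (hℓ : 1 ≤ ℓ) (t : ℝ) (p : ℝ × ℝ) :
    (sym3Class5 ℓ (t • p)).det = t ^ 3 * rescaledDet ℓ t p := by
  obtain ⟨m, rfl⟩ : ∃ m, ℓ = m + 1 := ⟨ℓ - 1, by omega⟩
  have hexp : 2 * (m + 1) - 2 = 2 * m := by omega
  simp only [sym3Class5, rescaledDet, Matrix.det_fin_three, hexp, Prod.smul_fst, Prod.smul_snd,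
    smul_eq_mul, Matrix.of_apply, Matrix.cons_val', Matrix.cons_val_zero, Matrix.cons_val_fin_one,
    Matrix.cons_val_one, Matrix.cons_val]
  ring

lemma rescaledDet_zero {ℓ : ℕ} (hℓ : 2 ≤ ℓ) (p : ℝ × ℝ) :
    rescaledDet ℓ 0 p = p.1 ^ 2 * p.2 := by
  simp [rescaledDet, zero_pow (show 2 * ℓ - 2 ≠ 0 by omega)]

lemma continuous_rescaledDet (ℓ : ℕ) :
    Continuous fun q : ℝ × (ℝ × ℝ) => rescaledDet ℓ q.1 q.2 := by
  unfold rescaledDet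
  fun_prop

theorem cubic_fderiv_apply_eq_of_det_sym3Class5_eq {ℓ : ℕ} (hℓ : 2 ≤ ℓ) {Φ : ℝ × ℝ → ℝ × ℝ}
    {L : ℝ × ℝ →L[ℝ] ℝ × ℝ} (hΦ : HasFDerivAt Φ L 0) (hΦ0 : Φ 0 = 0) {w : ℝ × ℝ → ℝ}
    (hw : ContinuousAt w 0)
    (hdet : ∀ᶠ x in 𝓝 0, (sym3Class5 ℓ (Φ x)).det = w x * (sym3Class5 ℓ x).det)
    (v : ℝ × ℝ) : (L v).1 ^ 2 * (L v).2 = w 0 * (v.1 ^ 2 * v.2) := by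
  have hline : Tendsto (fun t : ℝ => t • v) (𝓝[≠] 0) (𝓝 0) := by
    have : Continuous fun t : ℝ => t • v := by fun_prop
    simpa using (this.tendsto 0).mono_left nhdsWithin_le_nhds
  have hlhs : Tendsto (fun t : ℝ => rescaledDet ℓ t (t⁻¹ • Φ (t • v))) (𝓝[≠] 0)
      (𝓝 (rescaledDet ℓ 0 (L v))) :=
    (continuous_rescaledDet ℓ).continuousAt.tendsto.comp
      (tendsto_nhdsWithin_of_tendsto_nhds tendsto_id |>.prodMk_nhds
        (hΦ.tendsto_inv_smul_comp_smul hΦ0 v))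
  have hrhs : Tendsto (fun t : ℝ => w (t • v) * rescaledDet ℓ t v) (𝓝[≠] 0)
      (𝓝 (w 0 * rescaledDet ℓ 0 v)) :=
    (hw.tendsto.comp hline).mul
      ((continuous_rescaledDet ℓ).continuousAt.tendsto.comp
        ((tendsto_nhdsWithin_of_tendsto_nhds tendsto_id).prodMk_nhds tendsto_const_nhds))
  have heq : (fun t : ℝ => rescaledDet ℓ t (t⁻¹ • Φ (t • v)))
      =ᶠ[𝓝[≠] 0] fun t => w (t • v) * rescaledDet ℓ t v := by
    filter_upwards [hline.eventually hdet, self_mem_nhdsWithin] with t ht (ht0 : t ≠ 0)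
    have hdilate : t • (t⁻¹ • Φ (t • v)) = Φ (t • v) := smul_inv_smul₀ ht0 _
    rw [← hdilate, det_sym3Class5_smul (by omega), det_sym3Class5_smul (by omega)] at ht
    exact mul_left_cancel₀ (pow_ne_zero 3 ht0) (by linear_combination ht)
  rw [← rescaledDet_zero hℓ, ← rescaledDet_zero hℓ]
  exact tendsto_nhds_unique (hlhs.congr' heq) hrhs

lemma sym3Class5_posSemidef {ℓ : ℕ} (hℓ : ℓ ≠ 0) {x : ℝ} (hx : 0 ≤ x) :
    (sym3Class5 ℓ (x, 0)).PosSemidef := by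
  have hdiag : sym3Class5 ℓ (x, 0) = Matrix.diagonal ![x, x, 0] := by
    ext i j
    fin_cases i <;> fin_cases j <;> simp [sym3Class5, zero_pow hℓ]
  rw [hdiag, Matrix.posSemidef_diagonal_iff]
  intro i
  fin_cases i <;> simp [hx]

theorem isotropy_orientation_preserving_sym3_class5_general (ℓ : ℕ) (hℓ : 2 ≤ ℓ)
    (A : ℝ × ℝ → Matrix (Fin 3) (Fin 3) ℝ)
    (hA : A = fun p => !![p.1, p.2 ^ ℓ, 0; p.2 ^ ℓ, p.1, 0; 0, 0, p.2])
    (Φ : ℝ × ℝ → ℝ × ℝ) (X : ℝ × ℝ → Matrix (Fin 3) (Fin 3) ℝ)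
    (s : Set (ℝ × ℝ)) (hs : s ∈ nhds (0 : ℝ × ℝ))
    (hΦ : ContDiffOn ℝ (⊤ : ℕ∞) Φ s) (hΦ0 : Φ 0 = 0)
    (hX : ContDiffOn ℝ (⊤ : ℕ∞) X s) (hXinv : ∀ x ∈ s, IsUnit (X x))
    (heq : ∀ x ∈ s, A (Φ x) = (X x)ᵀ * A x * X x) :
    0 < LinearMap.det ((fderiv ℝ Φ 0) : (ℝ × ℝ) →ₗ[ℝ] (ℝ × ℝ)) := by
  obtain rfl : A = sym3Class5 ℓ := hA
  have hΦd : HasFDerivAt Φ (fderiv ℝ Φ 0) 0 :=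
    ((hΦ.contDiffAt hs).differentiableAt (by simp)).hasFDerivAt
  have hdetX : (X 0).det ≠ 0 :=
    ((Matrix.isUnit_iff_isUnit_det _).mp (hXinv 0 (mem_of_mem_nhds hs))).ne_zero
  have hw : ContinuousAt (fun x => (X x).det ^ 2) 0 :=
    ((continuous_id.matrix_det.continuousAt).comp (hX.contDiffAt hs).continuousAt).pow 2
  have hdet : ∀ᶠ x in 𝓝 0, (sym3Class5 ℓ (Φ x)).det = (X x).det ^ 2 * (sym3Class5 ℓ x).det := by
    filter_upwards [hs] with x hx
    rw [heq x hx, Matrix.det_mul, Matrix.det_mul, Matrix.det_transpose]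
    ring
  have hray : ∀ᶠ t in 𝓝[>] (0 : ℝ), t • ((1 : ℝ), (0 : ℝ)) ∈ s :=
    have hline : Continuous fun t : ℝ => t • ((1 : ℝ), (0 : ℝ)) := by fun_prop
    nhdsWithin_le_nhds <| hline.tendsto' 0 0 (by simp) hs
  have hfst : ∀ᶠ t in 𝓝[>] (0 : ℝ), 0 ≤ (Φ (t • ((1 : ℝ), (0 : ℝ)))).1 := by
    filter_upwards [hray, self_mem_nhdsWithin] with t hts (ht : 0 < t)
    have hpsd :=
      (sym3Class5_posSemidef (ℓ := ℓ) (by omega) ht.le).conjTranspose_mul_mul_same (X (t, 0))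
    rw [Matrix.conjTranspose_eq_transpose_of_trivial, ← heq _ (by simpa using hts)] at hpsd
    simpa [sym3Class5] using hpsd.diag_nonneg (i := 0)
  exact LinearMap.det_pos_of_cubic_invariant _ (by positivity)
    (cubic_fderiv_apply_eq_of_det_sym3Class5_eq hℓ hΦd hΦ0 hw hdet)
    (hΦd.fst.apply_nonneg_of_eventually_nonneg (by simp [hΦ0]) hfst)

/-- For the `3 × 3` family `A(x₁,x₂)` with rows `(x₁, x₂^ℓ, 0)`, `(x₂^ℓ, x₁, 0)`, `(0, 0, x₂)`
(`ℓ ≥ 2`), any diffeomorphism-germ `Φ` at `0` in the isotropy group `𝒟_A` (i.e. with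
`A ∘ Φ = Xᵀ A X` near `0` for an invertible-matrix-valued `X`) preserves the orientation
of `ℝ²`. -/
theorem isotropy_orientation_preserving_sym3_class5 (ℓ : ℕ) (hℓ : 2 ≤ ℓ)
    (A : ℝ × ℝ → Matrix (Fin 3) (Fin 3) ℝ)
    (hA : A = fun p => !![p.1, p.2 ^ ℓ, 0; p.2 ^ ℓ, p.1, 0; 0, 0, p.2])
    (Φ : ℝ × ℝ → ℝ × ℝ) (X : ℝ × ℝ → Matrix (Fin 3) (Fin 3) ℝ)
    (s : Set (ℝ × ℝ)) (hs : s ∈ nhds (0 : ℝ × ℝ))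
    (hΦ : ContDiffOn ℝ (⊤ : ℕ∞) Φ s) (hΦ0 : Φ 0 = 0)
    (hdΦ : IsUnit (fderiv ℝ Φ 0))
    (hX : ContDiffOn ℝ (⊤ : ℕ∞) X s) (hXinv : ∀ x ∈ s, IsUnit (X x))
    (heq : ∀ x ∈ s, A (Φ x) = (X x)ᵀ * A x * X x) :
    0 < LinearMap.det ((fderiv ℝ Φ 0) : (ℝ × ℝ) →ₗ[ℝ] (ℝ × ℝ)) :=
  isotropy_orientation_preserving_sym3_class5_general ℓ hℓ A hA Φ X s hs hΦ hΦ0 hX hXinv heq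
end

section
/- Fix an integer ℓ ≥ 2 and let A : ℝ² → Matrix (Fin 2) (Fin 2) ℝ be A(x₁,x₂) = !![x₁, x₂^ℓ; x₂^ℓ, x₁]. Define Φ : ℝ² → ℝ² by Φ(x₁,x₂) = (x₁, -x₂) and let X = !![(-1)^ℓ, 0; 0, 1]. Then for every (x₁,x₂) ∈ ℝ², A(x₁,x₂) = Xᵀ * A(Φ(x₁,x₂)) * X, and Φ is an orientation-reversing linear diffeomorphism of ℝ², i.e., det (fderiv ℝ Φ 0) = -1 < 0. In particular the isotropy group 𝒟_A of A contains an orientation-reversing diffeomorphism. -/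
attribute [local instance] Matrix.normedAddCommGroup Matrix.normedSpace

open scoped Matrix

/-- For `A(x₁,x₂) = !![x₁, x₂^ℓ; x₂^ℓ, x₁]` (`ℓ ≥ 2`), the orientation-reversing linear
diffeomorphism `Φ(x₁,x₂) = (x₁, -x₂)` together with `X = !![(-1)^ℓ, 0; 0, 1]` satisfies
`A = Xᵀ (A ∘ Φ) X`, and `det (fderiv ℝ Φ 0) = -1 < 0`; hence the isotropy group `𝒟_A`
contains an orientation-reversing diffeomorphism. -/
theorem isotropy_contains_orientation_reversing (ℓ : ℕ) (hℓ : 2 ≤ ℓ)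
    (A : ℝ × ℝ → Matrix (Fin 2) (Fin 2) ℝ)
    (hA : A = fun p => !![p.1, p.2 ^ ℓ; p.2 ^ ℓ, p.1])
    (Φ : ℝ × ℝ → ℝ × ℝ) (hΦ : Φ = fun p => (p.1, -p.2))
    (X : Matrix (Fin 2) (Fin 2) ℝ) (hX : X = !![(-1 : ℝ) ^ ℓ, 0; 0, 1]) :
    (∀ x₁ x₂ : ℝ, A (x₁, x₂) = Xᵀ * A (Φ (x₁, x₂)) * X) ∧
    LinearMap.det ((fderiv ℝ Φ 0) : (ℝ × ℝ) →ₗ[ℝ] (ℝ × ℝ)) = -1 ∧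
    LinearMap.det ((fderiv ℝ Φ 0) : (ℝ × ℝ) →ₗ[ℝ] (ℝ × ℝ)) < 0 := by
  have key : ∀ x₁ x₂ : ℝ, A (x₁, x₂) = Xᵀ * A (Φ (x₁, x₂)) * X := by
    intro x₁ x₂
    subst hA hΦ hX
    have h1 : ((-1 : ℝ)) ^ (ℓ * 2) = 1 := by
      rw [mul_comm, pow_mul]; norm_num
    have h2 : (-x₂) ^ ℓ = (-1 : ℝ) ^ ℓ * x₂ ^ ℓ := by
      rw [neg_pow]
    ext i j
    fin_cases i <;> fin_cases j <;>
      simp [Matrix.mul_apply, Fin.sum_univ_succ, h2] <;> ring_nf <;> rw [h1] <;> ring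
  set e : (ℝ × ℝ) →L[ℝ] (ℝ × ℝ) :=
    (ContinuousLinearMap.fst ℝ ℝ ℝ).prod (-(ContinuousLinearMap.snd ℝ ℝ ℝ)) with he
  have hΦe : Φ = e := by
    subst hΦ; funext p; rfl
  have hfd : fderiv ℝ Φ 0 = e := by rw [hΦe]; exact e.fderiv
  have hdet : LinearMap.det ((fderiv ℝ Φ 0) : (ℝ × ℝ) →ₗ[ℝ] (ℝ × ℝ)) = -1 := by
    rw [hfd]
    rw [← LinearMap.det_toMatrix (Module.Basis.finTwoProd ℝ)]
    have : LinearMap.toMatrix (Module.Basis.finTwoProd ℝ) (Module.Basis.finTwoProd ℝ)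
        (e : (ℝ × ℝ) →ₗ[ℝ] (ℝ × ℝ)) = !![1, 0; 0, -1] := by
      ext i j
      fin_cases i <;> fin_cases j <;>
        simp [LinearMap.toMatrix_apply, Module.Basis.finTwoProd, he]
    rw [this]
    simp [Matrix.det_fin_two_of]
  exact ⟨key, hdet, hdet ▸ by norm_num⟩
end
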